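/- Let f : ℂ → ℂ be analytic on a neighborhood of c ∈ ℂ, not identically zero near c, satisfying f(c + z) = -f(c - z) for all small z, and suppose additionally that f'(c) = 0. Then the vanishing order of f at c is at least 3. -/

import Mathlib

open Filter

/-- If `f` is analytic at `c`, odd about `c`, not identically zero near `c`,
and moreover `f'(c) = 0`, then the vanishing order of `f` at `c` is at least 3. -/
theorem order_ge_three_of_odd_symmetry_and_deriv_zero
    {f : ℂ → ℂ} {c : ℂ} (hf : AnalyticAt ℂ f c)
    (hsym : ∀ᶠ z in nhds (0 : ℂ), f (c + z) = -f (c - z))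
    (hne : ¬ ∀ᶠ z in nhds c, f z = 0)
    (hderiv : deriv f c = 0) :
    3 ≤ analyticOrderAt f c := by
  have hfc : f c = 0 := by
    have h0 := hsym.self_of_nhds
    simp only [add_zero, sub_zero] at h0
    linear_combination h0 / 2
  by_contra hlt
  push_neg at hlt
  -- the order is finite
  have htop : analyticOrderAt f c ≠ ⊤ := by
    intro h
    exact hne (analyticOrderAt_eq_top.mp h)
  obtain ⟨n, hn⟩ := WithTop.ne_top_iff_exists.mp htop
  rw [← hn] at hlt
  have hn3 : n < 3 := by
    have : (n : ℕ∞) < ((3 : ℕ) : ℕ∞) := by exact hlt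
    exact_mod_cast this
  obtain ⟨g, hg_an, hg_ne, hg_eq⟩ := (hf.analyticOrderAt_eq_natCast (n := n)).mp hn.symm
  have htend : Filter.Tendsto (fun z : ℂ => c + z) (nhds 0) (nhds c) := by
    simpa [Pi.add_def] using (continuous_const.add continuous_id).tendsto (0 : ℂ)
  have htend' : Filter.Tendsto (fun z : ℂ => c - z) (nhds 0) (nhds c) := by
    simpa [Pi.sub_def] using (continuous_const.sub continuous_id).tendsto (0 : ℂ)
  interval_cases n
  · -- order 0 : g c = f c = 0, contradiction
    have := hg_eq.self_of_nhds
    simp only [sub_self, pow_zero, one_smul] at this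
    exact hg_ne (this ▸ hfc)
  · -- order 1 : deriv f c = g c ≠ 0, contradiction
    have hd : HasDerivAt (fun z => (z - c) ^ 1 • g z)
        ((1 : ℂ) * g c + (c - c) ^ 1 * deriv g c) c := by
      simpa [pow_one, Pi.mul_def] using
        (((hasDerivAt_id c).sub_const c).mul hg_an.differentiableAt.hasDerivAt)
    have : deriv f c = (1 : ℂ) * g c + (c - c) ^ 1 * deriv g c := by
      rw [Filter.EventuallyEq.deriv_eq hg_eq]
      exact hd.deriv
    rw [hderiv] at this
    simp only [sub_self, one_mul, pow_one, zero_mul, add_zero] at this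
    exact hg_ne this.symm
  · -- order 2 : oddness forces g(c+z) = -g(c-z) for z ≠ 0, so g c = 0
    have h1 : ∀ᶠ z in nhds (0 : ℂ), f (c + z) = z ^ 2 * g (c + z) := by
      filter_upwards [htend.eventually hg_eq] with z hz
      simpa using hz
    have h2 : ∀ᶠ z in nhds (0 : ℂ), f (c - z) = z ^ 2 * g (c - z) := by
      filter_upwards [htend'.eventually hg_eq] with z hz
      simpa [neg_pow, sub_sub_cancel_left] using hz
    have h3 : ∀ᶠ z in nhdsWithin (0 : ℂ) {(0:ℂ)}ᶜ,
        g (c + z) + g (c - z) = 0 := by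
      filter_upwards [eventually_nhdsWithin_of_eventually_nhds (h1.and (h2.and hsym)),
        self_mem_nhdsWithin] with z hz hz0
      have hz2 : (z : ℂ) ^ 2 ≠ 0 := pow_ne_zero _ hz0
      have : z ^ 2 * g (c + z) = -(z ^ 2 * g (c - z)) := by
        rw [← hz.1, ← hz.2.1]; exact hz.2.2
      have hcancel : g (c + z) = -g (c - z) :=
        mul_left_cancel₀ hz2 (by linear_combination this)
      linear_combination hcancel
    have hcont : ContinuousAt (fun z : ℂ => g (c + z) + g (c - z)) 0 := by
      have hg_cont := hg_an.continuousAt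
      have c1 : ContinuousAt (fun z : ℂ => g (c + z)) 0 :=
        ContinuousAt.comp (by simpa using hg_cont)
          ((continuous_const.add continuous_id).continuousAt)
      have c2 : ContinuousAt (fun z : ℂ => g (c - z)) 0 :=
        ContinuousAt.comp (by simpa using hg_cont)
          ((continuous_const.sub continuous_id).continuousAt)
      exact c1.add c2
    have hval : g (c + 0) + g (c - 0) = 0 :=
      tendsto_nhds_unique (hcont.continuousWithinAt.tendsto)
        (Filter.Tendsto.congr' (h3.mono fun z hz => hz.symm) tendsto_const_nhds)
    simp only [add_zero, sub_zero] at hval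
    have : g c = 0 := by linear_combination hval / 2
    exact hg_ne this
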